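/- Let x^* = (r, 0, …, 0) and y^* = (ρ, h, 0, …, 0) in ℝ^d with r, ρ > 0, h ≠ 0, r ≠ ρ, and ⟨x^*, y^*⟩ = rρ > 0. Let S_c ∈ (0, π/2) with cos S_c = τ⁻(x^*, y^*). Then the determinant of the 2×2 matrix M = (1/(2|x^*-y^*|²)) [[2h², (1+cos S_c)ρh - 2rh], [2ρh - (1+cos S_c)rh, 2(r-ρ)²]] equals h²(1 - cos S_c)(2(r-ρ)² + rρ(1 - cos S_c))/(4|x^*-y^*|⁴). -/

import Mathlib

/-- With `a = 1 + c`, the determinant is `h² (2 - a) (2 (r² + ρ²) - (a + 2) r ρ)`. -/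
theorem det_two_distSq_smul_M (r ρ h c : ℝ) :
    !![2 * h ^ 2, (1 + c) * ρ * h - 2 * r * h;
       2 * ρ * h - (1 + c) * r * h, 2 * (r - ρ) ^ 2].det
      = h ^ 2 * (1 - c) * (2 * (r - ρ) ^ 2 + r * ρ * (1 - c)) := by
  rw [Matrix.det_fin_two_of]
  ring

theorem stmt15_general (r ρ h Sc : ℝ) :
    Matrix.det ((1 / (2 * ((r - ρ) ^ 2 + h ^ 2))) •
        !![2 * h ^ 2, (1 + Real.cos Sc) * ρ * h - 2 * r * h;
           2 * ρ * h - (1 + Real.cos Sc) * r * h, 2 * (r - ρ) ^ 2])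
      = h ^ 2 * (1 - Real.cos Sc) * (2 * (r - ρ) ^ 2 + r * ρ * (1 - Real.cos Sc)) /
        (4 * ((r - ρ) ^ 2 + h ^ 2) ^ 2) := by
  rw [Matrix.det_smul, Fintype.card_fin, det_two_distSq_smul_M]
  generalize (r - ρ) ^ 2 + h ^ 2 = D  -- `ring` treats `(a + b)⁻¹` as an atom, so fix the sum first
  ring

theorem stmt15 (r ρ h Sc : ℝ) (hr : 0 < r) (hρ : 0 < ρ) (hh : h ≠ 0) (hrρ : r ≠ ρ)
    (hSc : Sc ∈ Set.Ioo 0 (Real.pi / 2))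
    (hcos : Real.cos Sc =
      (r ^ 2 + (ρ ^ 2 + h ^ 2) -
        Real.sqrt ((r + ρ) ^ 2 + h ^ 2) * Real.sqrt ((r - ρ) ^ 2 + h ^ 2)) /
        (2 * (r * ρ))) :
    Matrix.det ((1 / (2 * ((r - ρ) ^ 2 + h ^ 2))) •
        !![2 * h ^ 2, (1 + Real.cos Sc) * ρ * h - 2 * r * h;
           2 * ρ * h - (1 + Real.cos Sc) * r * h, 2 * (r - ρ) ^ 2])
      = h ^ 2 * (1 - Real.cos Sc) * (2 * (r - ρ) ^ 2 + r * ρ * (1 - Real.cos Sc)) /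
        (4 * ((r - ρ) ^ 2 + h ^ 2) ^ 2) :=
  stmt15_general r ρ h Sc
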